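/- Let g be a metric on ℝⁿ with values in ℂ^{n×n} such that at some point x₀, g(x₀) = I and Θ^g_{jk}(x₀) is the matrix with a 1 in row j, column k and 0 elsewhere. Then at x₀ the Nakano form of the inverse metric satisfies Σ_{j,k=1}^n (Θ^{g⁻¹}_{jk} u_j, u_k)_{g⁻¹} = -|Σ_{j=1}^n u_{jj}|² ≤ 0 for every n-tuple {u_j} ⊂ ℂⁿ with u_j = (u_{j1},…,u_{jn}), while the Nakano form of g at x₀ equals Σ_{j,k} u_{jk}\bar{u}_{kj}, which is neither always nonnegative nor always nonpositive for n ≥ 2. -/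

import Mathlib

open scoped ComplexOrder
open Matrix MeasureTheory

section Preamble

variable {ι : Type*} [Fintype ι] [DecidableEq ι] {r : ℕ}

/-- Partial derivative of a complex-valued function on `ι → ℝ` in direction `j`. -/
noncomputable def pdC (j : ι) (f : (ι → ℝ) → ℂ) (x : ι → ℝ) : ℂ :=
  fderiv ℝ f x (Pi.single j 1)

/-- Partial derivative of a real-valued function on `ι → ℝ` in direction `j`. -/
noncomputable def pdR (j : ι) (f : (ι → ℝ) → ℝ) (x : ι → ℝ) : ℝ :=
  fderiv ℝ f x (Pi.single j 1)

/-- Entrywise partial derivative of a matrix-valued function. -/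
noncomputable def mpd (j : ι) (g : (ι → ℝ) → Matrix (Fin r) (Fin r) ℂ) (x : ι → ℝ) :
    Matrix (Fin r) (Fin r) ℂ :=
  Matrix.of fun a b => pdC j (fun y => g y a b) x

/-- The curvature-type quantity `Θ_{jk} = ∂_{x_k}(g⁻¹ ∂_{x_j} g)`. -/
noncomputable def Theta (g : (ι → ℝ) → Matrix (Fin r) (Fin r) ℂ) (j k : ι) (x : ι → ℝ) :
    Matrix (Fin r) (Fin r) ℂ :=
  mpd k (fun y => (g y)⁻¹ * mpd j g y) x

/-- The pairing `(u, v)_g = v* g u`. -/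
noncomputable def ip (g : Matrix (Fin r) (Fin r) ℂ) (u v : Fin r → ℂ) : ℂ :=
  star v ⬝ᵥ g.mulVec u

/-- A metric: twice differentiable entries, Hermitian positive definite values. -/
def IsMetric (g : (ι → ℝ) → Matrix (Fin r) (Fin r) ℂ) : Prop :=
  (∀ x, (g x).PosDef) ∧ ∀ a b, ContDiff ℝ 2 fun x => g x a b

/-- Log concavity in the sense of Nakano. -/
def NakanoLogConcave (g : (ι → ℝ) → Matrix (Fin r) (Fin r) ℂ) : Prop :=
  ∀ (x : ι → ℝ) (u : ι → Fin r → ℂ),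
    ∑ j, ∑ k, ip (g x) ((Theta g j k x).mulVec (u j)) (u k) ≤ 0

/-- Log concavity in the sense of Griffiths. -/
def GriffithsLogConcave (g : (ι → ℝ) → Matrix (Fin r) (Fin r) ℂ) : Prop :=
  ∀ (x : ι → ℝ) (u : Fin r → ℂ) (v : ι → ℂ),
    ∑ j, ∑ k, ip (g x) ((Theta g j k x).mulVec u) u * (v j * star (v k)) ≤ 0

end Preamble

/-! For Hermitian invertible `g`, differentiating `g g⁻¹ = 1` gives
`(g⁻¹)⁻¹ ∂_j(g⁻¹) = -∂_j g g⁻¹ = -(g⁻¹ ∂_j g)ᴴ`, and differentiating once more in `x_k` gives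
`Θ^{g⁻¹}_{jk} = -(Θ^g_{jk})ᴴ` at every point. At `x₀` this is `-E_{kj}`, so both Nakano forms
collapse to sums of products of coordinates of the `u_j`. -/

section Differentiability

variable {𝕜 : Type*} [NontriviallyNormedField 𝕜] {E : Type*} [NormedAddCommGroup E]
  [NormedSpace 𝕜 E] {K : Type*} [NormedField K] [NormedAlgebra 𝕜 K] {n : Type*} [Fintype n]
  [DecidableEq n] {M : E → Matrix n n K} {x : E}

theorem differentiableAt_det (hM : ∀ a b, DifferentiableAt 𝕜 (fun y => M y a b) x) :
    DifferentiableAt 𝕜 (fun y => (M y).det) x := by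
  simp only [Matrix.det_apply]
  fun_prop

theorem differentiableAt_inv_apply (hM : ∀ a b, DifferentiableAt 𝕜 (fun y => M y a b) x)
    (hx : (M x).det ≠ 0) (a b : n) : DifferentiableAt 𝕜 (fun y => (M y)⁻¹ a b) x := by
  simp only [Matrix.inv_def, Ring.inverse_eq_inv', Matrix.smul_apply, smul_eq_mul,
    Matrix.adjugate_apply]
  refine ((differentiableAt_det hM).inv hx).mul (differentiableAt_det fun c d => ?_)
  rcases eq_or_ne c b with rfl | hc
  · simp only [Matrix.updateRow_self]
    fun_prop
  · simpa only [Matrix.updateRow_ne hc] using hM c d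

end Differentiability

section PartialDerivatives

variable {ι : Type*} [DecidableEq ι] {r : ℕ} (j : ι) {x : ι → ℝ}

theorem pdC_star [Fintype ι] (f : (ι → ℝ) → ℂ) :
    pdC j (fun y => star (f y)) x = star (pdC j f x) := by
  simp only [pdC]
  rw [show (fun y => star (f y)) = Complex.conjCLE ∘ f from rfl,
    Complex.conjCLE.comp_fderiv]
  rfl

theorem pdC_mul [Fintype ι] {f h : (ι → ℝ) → ℂ} (hf : DifferentiableAt ℝ f x)
    (hh : DifferentiableAt ℝ h x) :
    pdC j (fun y => f y * h y) x = pdC j f x * h x + f x * pdC j h x := by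
  simp only [pdC, fderiv_fun_mul hf hh, _root_.add_apply, _root_.smul_apply, smul_eq_mul]
  ring

theorem pdC_sum [Fintype ι] {α : Type*} (s : Finset α) {f : α → (ι → ℝ) → ℂ}
    (hf : ∀ c ∈ s, DifferentiableAt ℝ (f c) x) :
    pdC j (fun y => ∑ c ∈ s, f c y) x = ∑ c ∈ s, pdC j (f c) x := by
  simp only [pdC, fderiv_fun_sum hf, _root_.sum_apply]

theorem mpd_const (C : Matrix (Fin r) (Fin r) ℂ) : mpd j (fun _ => C) x = 0 := by
  ext a b
  simp [mpd, pdC]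

theorem mpd_neg [Fintype ι] (A : (ι → ℝ) → Matrix (Fin r) (Fin r) ℂ) :
    mpd j (fun y => -A y) x = -mpd j A x := by
  ext a b
  simp [mpd, pdC, fderiv_fun_neg]

theorem mpd_conjTranspose [Fintype ι] (A : (ι → ℝ) → Matrix (Fin r) (Fin r) ℂ) :
    mpd j (fun y => (A y)ᴴ) x = (mpd j A x)ᴴ := by
  ext a b
  simp only [mpd, Matrix.of_apply, Matrix.conjTranspose_apply, pdC_star]

theorem mpd_mul [Fintype ι] {A B : (ι → ℝ) → Matrix (Fin r) (Fin r) ℂ}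
    (hA : ∀ a b, DifferentiableAt ℝ (fun y => A y a b) x)
    (hB : ∀ a b, DifferentiableAt ℝ (fun y => B y a b) x) :
    mpd j (fun y => A y * B y) x = mpd j A x * B x + A x * mpd j B x := by
  ext a b
  simp only [mpd, Matrix.of_apply, Matrix.mul_apply, Matrix.add_apply]
  rw [pdC_sum j _ (f := fun c y => A y a c * B y c b) fun c _ => (hA a c).mul (hB c b),
    ← Finset.sum_add_distrib]
  simp only [pdC_mul j (hA _ _) (hB _ _)]

theorem mpd_inv [Fintype ι] {M : (ι → ℝ) → Matrix (Fin r) (Fin r) ℂ}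
    (hdet : ∀ y, IsUnit (M y).det) (hM : ∀ a b, Differentiable ℝ fun y => M y a b) :
    mpd j (fun y => (M y)⁻¹) x = -((M x)⁻¹ * mpd j M x * (M x)⁻¹) := by
  have hprod := mpd_mul j (x := x) (fun a b => (hM a b).differentiableAt)
    (differentiableAt_inv_apply (fun a b => (hM a b).differentiableAt) (hdet x).ne_zero)
  simp only [Matrix.mul_nonsing_inv _ (hdet _), mpd_const] at hprod
  calc mpd j (fun y => (M y)⁻¹) x = (M x)⁻¹ * (M x * mpd j (fun y => (M y)⁻¹) x) := by
        rw [← mul_assoc, Matrix.nonsing_inv_mul _ (hdet x), one_mul]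
    _ = -((M x)⁻¹ * mpd j M x * (M x)⁻¹) := by
        rw [eq_neg_of_add_eq_zero_right hprod.symm]
        noncomm_ring

end PartialDerivatives

section Curvature

variable {ι : Type*} [Fintype ι] [DecidableEq ι] {r : ℕ}

theorem mpd_isHermitian {g : (ι → ℝ) → Matrix (Fin r) (Fin r) ℂ}
    (hherm : ∀ y, (g y).IsHermitian) (j : ι) (x : ι → ℝ) : (mpd j g x).IsHermitian := by
  rw [Matrix.IsHermitian, ← mpd_conjTranspose]
  simp only [fun y => (hherm y).eq]

theorem Theta_inv_eq_neg_conjTranspose {g : (ι → ℝ) → Matrix (Fin r) (Fin r) ℂ}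
    (hherm : ∀ y, (g y).IsHermitian) (hdet : ∀ y, IsUnit (g y).det)
    (hdiff : ∀ a b, Differentiable ℝ fun y => g y a b) (j k : ι) (x : ι → ℝ) :
    Theta (fun y => (g y)⁻¹) j k x = -(Theta g j k x)ᴴ := by
  have hlog : ∀ y, ((g y)⁻¹)⁻¹ * mpd j (fun z => (g z)⁻¹) y = -((g y)⁻¹ * mpd j g y)ᴴ := by
    intro y
    rw [Matrix.nonsing_inv_nonsing_inv _ (hdet y), mpd_inv j hdet hdiff,
      Matrix.conjTranspose_mul, (mpd_isHermitian hherm j y).eq, (hherm y).inv.eq, mul_neg,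
      ← mul_assoc, ← mul_assoc, Matrix.mul_nonsing_inv _ (hdet y), one_mul]
  simp only [Theta, hlog, mpd_neg, mpd_conjTranspose]

end Curvature

theorem ip_one_single_mulVec {r : ℕ} (j k : Fin r) (c : ℂ) (v w : Fin r → ℂ) :
    ip 1 ((Matrix.single j k c).mulVec v) w = c * v k * star (w j) := by
  simp [ip, Matrix.single_mulVec_eq, mul_comm]

theorem sum_sum_mul_star_eq_norm_sq {ι : Type*} [Fintype ι] (s : ι → ℂ) :
    ∑ j, ∑ k, s j * star (s k) = ((‖∑ j, s j‖ ^ 2 : ℝ) : ℂ) := by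
  rw [← Finset.sum_mul_sum, ← star_sum, Complex.star_def, Complex.mul_conj']
  push_cast
  rfl

theorem exists_sum_mul_star_swap_pos {ι : Type*} [Fintype ι] [Nonempty ι] :
    ∃ u : ι → ι → ℂ, 0 < ∑ j, ∑ k, u j k * star (u k j) := by
  refine ⟨fun _ _ => 1, ?_⟩
  simp only [star_one, mul_one, Finset.sum_const, Finset.card_univ, nsmul_eq_mul]
  exact_mod_cast Nat.mul_pos Fintype.card_pos Fintype.card_pos

theorem exists_sum_mul_star_swap_neg {ι : Type*} [Fintype ι] [DecidableEq ι] [Nontrivial ι] :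
    ∃ u : ι → ι → ℂ, ∑ j, ∑ k, u j k * star (u k j) < 0 := by
  obtain ⟨a, b, hab⟩ := exists_pair_ne ι
  refine ⟨fun j k => Matrix.single a b 1 j k - Matrix.single b a 1 j k, ?_⟩
  norm_num [Matrix.single_apply, sub_mul, Finset.sum_sub_distrib, ite_and, hab, hab.symm]

theorem statement12 {n : ℕ} (g : (Fin n → ℝ) → Matrix (Fin n) (Fin n) ℂ)
    (hg : IsMetric g) (x₀ : Fin n → ℝ) (h0 : g x₀ = 1)
    (hΘ : ∀ j k, Theta g j k x₀ = Matrix.single j k 1) :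
    (∀ u : Fin n → Fin n → ℂ,
      ∑ j, ∑ k, ip ((g x₀)⁻¹) ((Theta (fun x => (g x)⁻¹) j k x₀).mulVec (u j)) (u k)
          = -((‖∑ j, u j j‖ ^ 2 : ℝ) : ℂ) ∧
      ∑ j, ∑ k, ip ((g x₀)⁻¹) ((Theta (fun x => (g x)⁻¹) j k x₀).mulVec (u j)) (u k) ≤ 0) ∧
    (∀ u : Fin n → Fin n → ℂ,
      ∑ j, ∑ k, ip (g x₀) ((Theta g j k x₀).mulVec (u j)) (u k)
        = ∑ j, ∑ k, u j k * star (u k j)) ∧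
    (2 ≤ n →
      (∃ u : Fin n → Fin n → ℂ, 0 < ∑ j, ∑ k, u j k * star (u k j)) ∧
      (∃ u : Fin n → Fin n → ℂ, ∑ j, ∑ k, u j k * star (u k j) < 0)) := by
  obtain ⟨hpd, hsmooth⟩ := hg
  have hΘinv : ∀ j k, Theta (fun x => (g x)⁻¹) j k x₀ = Matrix.single k j (-1) := fun j k => by
    rw [Theta_inv_eq_neg_conjTranspose (fun y => (hpd y).1)
      (fun y => (g y).isUnit_iff_isUnit_det.1 (hpd y).isUnit)
      (fun a b => (hsmooth a b).differentiable two_ne_zero), hΘ, Matrix.conjTranspose_single,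
      star_one, Matrix.single_neg]
  have hinv : ∀ u : Fin n → Fin n → ℂ,
      ∑ j, ∑ k, ip ((g x₀)⁻¹) ((Theta (fun x => (g x)⁻¹) j k x₀).mulVec (u j)) (u k)
        = -((‖∑ j, u j j‖ ^ 2 : ℝ) : ℂ) := fun u => by
    simp only [h0, inv_one, hΘinv, ip_one_single_mulVec, neg_mul, one_mul, Finset.sum_neg_distrib,
      sum_sum_mul_star_eq_norm_sq fun j => u j j]
  refine ⟨fun u => ⟨hinv u, ?_⟩, fun u => ?_, fun hn => ?_⟩
  · rw [hinv]
    exact neg_nonpos.mpr (Complex.zero_le_real.mpr (sq_nonneg _))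
  · simp only [h0, hΘ, ip_one_single_mulVec, one_mul]
  · have : Nontrivial (Fin n) := Fin.nontrivial_iff_two_le.mpr hn
    exact ⟨exists_sum_mul_star_swap_pos, exists_sum_mul_star_swap_neg⟩
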